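/- arXiv:1608.03680 — 4 statements merged into one kernel-verified Lean document; each statement's English description precedes it below -/
import Mathlib

section
/- Let V be a finite weighted point set, R > 0, and W₀ > 0. A point x satisfies W*(x) < W₀ if and only if x belongs to the intersection I(W₀) of the convex hulls CH(𝒞(S)) over all subsets S ⊆ V with W(S) ≥ W₀. -/
/-!
A follower at `y` captures `v` iff `‖y - x‖² < 2 ⟪y - x, v - x⟫`. So if `‖y - x‖ ≥ R`, every
captured `v` satisfies `R / 2 * ‖u‖ < ⟪u, v - x⟫` for `u = y - x`; this says that the whole disk of
radius `R / 2` around `v` lies in the open half-plane `{p | ⟪u, x⟫ < ⟪u, p⟫}`, which therefore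
contains the convex hull of the disks around the captured customers but not `x`. Conversely, if `x`
lies outside the convex hull of the disks around `S`, the Hahn–Banach theorem (the hull is closed,
being `convexHull S + closedBall 0 (R / 2)`) gives such a `u`, and the follower at distance `R`
from `x` in the direction of `u` captures all of `S`.
-/

open scoped RealInnerProductSpace

noncomputable section

/-- The Euclidean plane. -/
abbrev Plane := EuclideanSpace ℝ (Fin 2)

/-- The point of the plane with coordinates `(a, b)`. -/
def pt (a b : ℝ) : Plane := (WithLp.equiv 2 (Fin 2 → ℝ)).symm ![a, b]

/-- `Wcap V w x y` = total weight of customers in `V` strictly closer to `y` than to `x`. -/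
def Wcap (V : Finset Plane) (w : Plane → ℝ) (x y : Plane) : ℝ :=
  ∑ v ∈ V, if dist v y < dist v x then w v else 0

/-- `Wstar V w R x` = the weight loss of `x`: the supremum of captures over feasible
follower positions `y` with `dist x y ≥ R`. -/
def Wstar (V : Finset Plane) (w : Plane → ℝ) (R : ℝ) (x : Plane) : ℝ :=
  sSup (Wcap V w x '' {y : Plane | R ≤ dist x y})

/-- Unit direction of polar angle `θ`. -/
def dir (θ : ℝ) : Plane := pt (Real.cos θ) (Real.sin θ)

/-- `Wang V w R x θ` = capture of the follower placed at `x + R•(cos θ, sin θ)` against `x`. -/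
def Wang (V : Finset Plane) (w : Plane → ℝ) (R : ℝ) (x : Plane) (θ : ℝ) : ℝ :=
  Wcap V w x (x + R • dir θ)

/-- The weight loss of `x`, as the supremum of captures over the circle of radius `R`. -/
def WstarC (V : Finset Plane) (w : Plane → ℝ) (R : ℝ) (x : Plane) : ℝ :=
  sSup (Set.range (Wang V w R x))

open scoped Pointwise
open Metric

theorem isClosed_convexHull_biUnion_closedBall {F : Type*} [NormedAddCommGroup F]
    [NormedSpace ℝ F] (S : Finset F) (r : ℝ) :
    IsClosed (convexHull ℝ (⋃ v ∈ S, closedBall v r)) := by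
  have hunion : ⋃ v ∈ S, closedBall v r = (S : Set F) + closedBall 0 r := by
    simp_rw [← Set.iUnion_add_left_image, Finset.mem_coe]
    refine Set.iUnion₂_congr fun v _ => ?_
    rw [← vadd_closedBall_zero]
    rfl
  rw [hunion, convexHull_add, (convex_closedBall 0 r).convexHull_eq]
  exact isClosed_closedBall.add_left_of_isCompact (S.finite_toSet.isCompact_convexHull ℝ)

section InnerProductSpace

variable {E : Type*} [NormedAddCommGroup E] [InnerProductSpace ℝ E]

theorem dist_lt_dist_iff_inner (v x y : E) :
    dist v y < dist v x ↔ ‖y - x‖ ^ 2 < 2 * ⟪y - x, v - x⟫ := by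
  have hy : dist v y ^ 2 = dist v x ^ 2 - 2 * ⟪v - x, y - x⟫ + ‖y - x‖ ^ 2 := by
    rw [dist_eq_norm, dist_eq_norm, ← norm_sub_sq_real, sub_sub_sub_cancel_right]
  rw [← sq_lt_sq₀ dist_nonneg dist_nonneg, hy, real_inner_comm]
  constructor <;> intro h <;> linarith

theorem lt_inner_sub_of_dist_lt_dist {R : ℝ} {v x y : E} (hy : R ≤ dist x y)
    (h : dist v y < dist v x) : R / 2 * ‖y - x‖ < ⟪y - x, v - x⟫ := by
  rw [dist_lt_dist_iff_inner] at h
  rw [dist_comm, dist_eq_norm] at hy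
  nlinarith [mul_le_mul_of_nonneg_right hy (norm_nonneg (y - x))]

theorem dist_add_smul_lt_dist_of_lt_inner {R : ℝ} (hR : 0 < R) {u v x : E}
    (h : R / 2 * ‖u‖ < ⟪u, v - x⟫) : dist v (x + (R / ‖u‖) • u) < dist v x := by
  have hu : 0 < ‖u‖ := norm_pos_iff.2 fun hu => by simp [hu] at h
  rw [dist_lt_dist_iff_inner, add_sub_cancel_left, norm_smul, real_inner_smul_left,
    Real.norm_of_nonneg (by positivity), div_mul_cancel₀ _ hu.ne']
  calc R ^ 2 = 2 * (R / ‖u‖) * (R / 2 * ‖u‖) := by field_simp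
    _ < 2 * (R / ‖u‖ * ⟪u, v - x⟫) := by
      rw [mul_assoc]
      exact mul_lt_mul_of_pos_left (mul_lt_mul_of_pos_left h (by positivity)) two_pos

theorem exists_forall_inner_lt_of_notMem [CompleteSpace E] {C : Set E} (hconv : Convex ℝ C)
    (hclosed : IsClosed C) {x : E} (hx : x ∉ C) : ∃ a : E, ∀ p ∈ C, ⟪a, x⟫ < ⟪a, p⟫ := by
  obtain ⟨f, c, hfx, hfC⟩ := geometric_hahn_banach_point_closed hconv hclosed hx
  refine ⟨(InnerProductSpace.toDual ℝ E).symm f, fun p hp => ?_⟩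
  simp only [InnerProductSpace.toDual_symm_apply]
  exact hfx.trans (hfC p hp)

theorem exists_forall_lt_inner_sub_of_notMem_convexHull [CompleteSpace E] {r : ℝ} (hr : 0 ≤ r)
    {S : Finset E} {x : E} (hx : x ∉ convexHull ℝ (⋃ v ∈ S, closedBall v r)) :
    ∃ u : E, ∀ v ∈ S, r * ‖u‖ < ⟪u, v - x⟫ := by
  obtain ⟨u, hu⟩ := exists_forall_inner_lt_of_notMem (convex_convexHull ℝ _)
    (isClosed_convexHull_biUnion_closedBall S r) hx
  refine ⟨u, fun v hv => ?_⟩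
  -- the point of the disk around `v` furthest in the direction `-u` (just `v` if `u = 0`)
  have hmem : v - (r / ‖u‖) • u ∈ convexHull ℝ (⋃ v ∈ S, closedBall v r) := by
    refine subset_convexHull ℝ _ (Set.mem_biUnion hv ?_)
    rw [mem_closedBall, dist_eq_norm, sub_sub_cancel_left, norm_neg, norm_smul, norm_div,
      norm_norm, Real.norm_of_nonneg hr]
    rcases eq_or_ne ‖u‖ 0 with h0 | h0
    · simpa [h0] using hr
    · rw [div_mul_cancel₀ _ h0]
  have hin : ⟪u, v - (r / ‖u‖) • u⟫ = ⟪u, v⟫ - r * ‖u‖ := by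
    rw [inner_sub_right, real_inner_smul_right, real_inner_self_eq_norm_sq]
    rcases eq_or_ne ‖u‖ 0 with h0 | h0
    · simp [h0]
    · field_simp
  have := hu _ hmem
  rw [inner_sub_right]
  linarith

theorem notMem_convexHull_of_forall_lt_inner_sub {r : ℝ} {S : Finset E} {x u : E}
    (hu : ∀ v ∈ S, r * ‖u‖ < ⟪u, v - x⟫) : x ∉ convexHull ℝ (⋃ v ∈ S, closedBall v r) := by
  intro hx
  have hsub : convexHull ℝ (⋃ v ∈ S, closedBall v r) ⊆ {p | ⟪u, x⟫ < ⟪u, p⟫} := by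
    refine convexHull_min (Set.iUnion₂_subset fun v hv p hp => ?_) ?_
    · have hball : |⟪u, p - v⟫| ≤ ‖u‖ * r :=
        (abs_real_inner_le_norm u (p - v)).trans
          (mul_le_mul_of_nonneg_left (by rwa [← dist_eq_norm]) (norm_nonneg u))
      have hsplit : ⟪u, p⟫ - ⟪u, x⟫ = ⟪u, v - x⟫ + ⟪u, p - v⟫ := by
        rw [inner_sub_right, inner_sub_right]; ring
      have := hu v hv
      show ⟪u, x⟫ < ⟪u, p⟫
      linarith [neg_abs_le ⟪u, p - v⟫]
    · exact convex_halfSpace_gt (innerₛₗ ℝ u).isLinear _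
  exact lt_irrefl ⟪u, x⟫ (hsub hx)

end InnerProductSpace

theorem Wcap_eq_sum_filter (V : Finset Plane) (w : Plane → ℝ) (x y : Plane) :
    Wcap V w x y = ∑ v ∈ V with dist v y < dist v x, w v :=
  (Finset.sum_filter _ _).symm

theorem sum_le_Wcap {V S : Finset Plane} {w : Plane → ℝ} (hw : ∀ v ∈ V, 0 ≤ w v) (hSV : S ⊆ V)
    {x y : Plane} (hS : ∀ v ∈ S, dist v y < dist v x) : ∑ v ∈ S, w v ≤ Wcap V w x y := by
  rw [Wcap_eq_sum_filter]
  exact Finset.sum_le_sum_of_subset_of_nonneg (fun v hv => Finset.mem_filter.2 ⟨hSV hv, hS v hv⟩)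
    fun v hv _ => hw v (Finset.mem_filter.1 hv).1

/-- `W*(x) < W₀` iff `x` lies in `I(W₀)`, the intersection of the convex
hulls `CH(𝒞(S))` over all subsets `S ⊆ V` of weight at least `W₀`. -/
theorem stmt_3 (V : Finset Plane) (w : Plane → ℝ) (hw : ∀ v ∈ V, 0 < w v)
    (R : ℝ) (hR : 0 < R) (W₀ : ℝ) (hW₀ : 0 < W₀) (x : Plane) :
    (∀ y : Plane, R ≤ dist x y → Wcap V w x y < W₀) ↔
      ∀ S : Finset Plane, S ⊆ V → W₀ ≤ ∑ v ∈ S, w v →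
        x ∈ convexHull ℝ (⋃ v ∈ S, Metric.closedBall v (R / 2)) := by
  constructor
  · intro hsmall S hSV hS
    by_contra hx
    obtain ⟨u, hu⟩ := exists_forall_lt_inner_sub_of_notMem_convexHull (by positivity) hx
    obtain ⟨v₀, hv₀⟩ : S.Nonempty := Finset.nonempty_of_sum_ne_zero (hW₀.trans_le hS).ne'
    have hu0 : u ≠ 0 := by
      rintro rfl
      simpa using hu v₀ hv₀
    have hdist : R ≤ dist x (x + (R / ‖u‖) • u) := by
      rw [dist_self_add_right, norm_smul, Real.norm_of_nonneg (by positivity),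
        div_mul_cancel₀ _ (norm_ne_zero_iff.2 hu0)]
    have hcap : ∀ v ∈ S, dist v (x + (R / ‖u‖) • u) < dist v x := fun v hv =>
      dist_add_smul_lt_dist_of_lt_inner hR (hu v hv)
    exact (hsmall _ hdist).not_ge (hS.trans (sum_le_Wcap (fun v hv => (hw v hv).le) hSV hcap))
  · intro hhull y hy
    by_contra! hlarge
    rw [Wcap_eq_sum_filter] at hlarge
    refine notMem_convexHull_of_forall_lt_inner_sub (u := y - x) (fun v hv => ?_)
      (hhull _ (Finset.filter_subset _ V) hlarge)
    exact lt_inner_sub_of_dist_lt_dist hy (Finset.mem_filter.1 hv).2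
end
end

section
/- The weight-loss function W* is quasi-convex along every line: for any two distinct points x₁, x₂ and any x on the open segment between them, W*(x) ≤ max{W*(x₁), W*(x₂)}. -/
/-!
If a follower at `y` captures weight `W` against `x`, then any `x'` on the far side of the line
through `x` perpendicular to `y - x` is exposed to the same loss: the mirror image `y'` of `x'`
in the perpendicular bisector of `x y` satisfies `dist x' y' ≥ dist x y` and captures against
`x'` exactly the half-plane that `y` captures against `x`. For `x` strictly between `x₁` and
`x₂`, one of `x₁ - x`, `x₂ - x` has non-positive inner product with `y - x`, so every capture
against `x` is dominated by `W*(x₁)` or `W*(x₂)`.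
-/

open scoped RealInnerProductSpace

noncomputable section

section InnerProductSpace

variable {E : Type*} [NormedAddCommGroup E] [InnerProductSpace ℝ E]

theorem dist_lt_dist_iff_norm_sq_lt_inner (v a b : E) :
    dist v b < dist v a ↔ ‖b - a‖ ^ 2 < 2 * ⟪v - a, b - a⟫ := by
  have h : ‖v - b‖ ^ 2 = ‖v - a‖ ^ 2 - 2 * ⟪v - a, b - a⟫ + ‖b - a‖ ^ 2 := by
    rw [← norm_sub_sq_real, sub_sub_sub_cancel_right]
  rw [dist_eq_norm, dist_eq_norm, ← sq_lt_sq₀ (norm_nonneg _) (norm_nonneg _), h]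
  constructor <;> intro <;> linarith

/-- The point `y'` is the mirror image of `x'` in the perpendicular bisector of `x y`. -/
theorem exists_dist_le_dist_and_dist_lt_dist_iff {x y x' : E} (hx' : ⟪x' - x, y - x⟫ ≤ 0) :
    ∃ y', dist x y ≤ dist x' y' ∧ ∀ v, dist v y' < dist v x' ↔ dist v y < dist v x := by
  set e := y - x
  set μ := 1 + 2 * ⟪x - x', e⟫ / ‖e‖ ^ 2
  have hμ_one : 1 ≤ μ := by
    have : ⟪x - x', e⟫ = -⟪x' - x, e⟫ := by rw [← inner_neg_left, neg_sub]
    have : 0 ≤ 2 * ⟪x - x', e⟫ / ‖e‖ ^ 2 := div_nonneg (by linarith) (by positivity)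
    linarith
  have hμ_pos : 0 < μ := by linarith
  have hμe : μ * ‖e‖ ^ 2 = ‖e‖ ^ 2 + 2 * ⟪x - x', e⟫ := by
    -- also for `e = 0`, where `μ = 1` because of the junk value of `/ 0`
    rw [add_mul, one_mul, div_mul_cancel_of_imp]
    intro he
    rw [norm_eq_zero.mp (pow_eq_zero_iff two_ne_zero |>.mp he), inner_zero_right, mul_zero]
  refine ⟨x' + μ • e, ?_, fun v => ?_⟩
  · rw [dist_self_add_right, norm_smul, Real.norm_of_nonneg hμ_pos.le, dist_comm, dist_eq_norm]
    exact le_mul_of_one_le_left (norm_nonneg _) hμ_one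
  · have hv : ⟪v - x', e⟫ = ⟪v - x, e⟫ + ⟪x - x', e⟫ := by
      rw [← inner_add_left, sub_add_sub_cancel]
    rw [dist_lt_dist_iff_norm_sq_lt_inner, dist_lt_dist_iff_norm_sq_lt_inner, add_sub_cancel_left,
      norm_smul, mul_pow, Real.norm_of_nonneg hμ_pos.le, inner_smul_right, hv]
    constructor <;> intro h <;> nlinarith

theorem inner_sub_nonpos_or_inner_sub_nonpos (x₁ x₂ d : E) {t : ℝ} (ht0 : 0 ≤ t) (ht1 : t ≤ 1) :
    ⟪x₁ - (x₁ + t • (x₂ - x₁)), d⟫ ≤ 0 ∨ ⟪x₂ - (x₁ + t • (x₂ - x₁)), d⟫ ≤ 0 := by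
  have h₁ : x₁ - (x₁ + t • (x₂ - x₁)) = (-t) • (x₂ - x₁) := by module
  have h₂ : x₂ - (x₁ + t • (x₂ - x₁)) = (1 - t) • (x₂ - x₁) := by module
  rw [h₁, h₂, real_inner_smul_left, real_inner_smul_left]
  rcases le_total 0 ⟪x₂ - x₁, d⟫ with h | h
  · left; nlinarith
  · right; nlinarith

end InnerProductSpace

theorem nonempty_setOf_le_dist {F : Type*} [NormedAddCommGroup F] [NormedSpace ℝ F] [Nontrivial F]
    (R : ℝ) (x : F) : {y : F | R ≤ dist x y}.Nonempty := by
  obtain ⟨u, hu⟩ := exists_norm_eq F (abs_nonneg R)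
  exact ⟨x + u, (le_abs_self R).trans_eq (by rw [dist_self_add_right, hu])⟩

section WeightLoss

variable {V : Finset Plane} {w : Plane → ℝ} {R : ℝ}

theorem Wcap_le_sum_abs (x y : Plane) : Wcap V w x y ≤ ∑ v ∈ V, |w v| :=
  Finset.sum_le_sum fun v _ => by split_ifs <;> simp [le_abs_self]

theorem Wcap_le_Wstar {x y : Plane} (hy : R ≤ dist x y) : Wcap V w x y ≤ Wstar V w R x :=
  le_csSup ⟨_, by rintro _ ⟨y, -, rfl⟩; exact Wcap_le_sum_abs x y⟩ ⟨y, hy, rfl⟩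

theorem Wcap_le_Wstar_of_inner_nonpos {x y x' : Plane} (hy : R ≤ dist x y)
    (hx' : ⟪x' - x, y - x⟫ ≤ 0) : Wcap V w x y ≤ Wstar V w R x' := by
  obtain ⟨y', hdist, hcap⟩ := exists_dist_le_dist_and_dist_lt_dist_iff hx'
  have : Wcap V w x y = Wcap V w x' y' := by
    simp only [Wcap, hcap]
  exact this ▸ Wcap_le_Wstar (hy.trans hdist)

end WeightLoss

theorem stmt_7_general (V : Finset Plane) (w : Plane → ℝ)
    (R : ℝ) (x₁ x₂ x : Plane)
    (t : ℝ) (ht0 : 0 < t) (ht1 : t < 1) (hx : x = x₁ + t • (x₂ - x₁)) :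
    Wstar V w R x ≤ max (Wstar V w R x₁) (Wstar V w R x₂) := by
  subst hx
  refine csSup_le ((nonempty_setOf_le_dist R _).image _) ?_
  rintro _ ⟨y, hy, rfl⟩
  rcases inner_sub_nonpos_or_inner_sub_nonpos x₁ x₂ (y - _) ht0.le ht1.le with h | h
  · exact (Wcap_le_Wstar_of_inner_nonpos hy h).trans (le_max_left _ _)
  · exact (Wcap_le_Wstar_of_inner_nonpos hy h).trans (le_max_right _ _)

/-- the weight-loss function is quasi-convex along every line. -/
theorem stmt_7 (V : Finset Plane) (w : Plane → ℝ) (hw : ∀ v ∈ V, 0 < w v)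
    (R : ℝ) (hR : 0 < R) (x₁ x₂ x : Plane) (hne : x₁ ≠ x₂)
    (t : ℝ) (ht0 : 0 < t) (ht1 : t < 1) (hx : x = x₁ + t • (x₂ - x₁)) :
    Wstar V w R x ≤ max (Wstar V w R x₁) (Wstar V w R x₂) :=
  stmt_7_general V w R x₁ x₂ x t ht0 ht1 hx
end
end

section
/- Let x₁ and x₂ be two points on a vertical line L with x₁ strictly above x₂. For any angle θ ∈ [0, π] (direction u_θ = (cos θ, sin θ)), the capture of the follower at x₁ + R·u_θ against x₁ is at most the capture at x₂ + R·u_θ against x₂: W(x₁, θ) ≤ W(x₂, θ). Symmetrically, for θ ∈ [π, 2π], W(x₂, θ) ≤ W(x₁, θ). -/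
/-!
A site `v` is strictly closer to `x + c` than to `x` iff `‖c‖² < 2⟪v - x, c⟫`. Moving `x` to
`x'` lowers the right-hand side by `2⟪x' - x, c⟫`, so when this is nonnegative every site captured
against `x'` is also captured against `x`. For `x₁ - x₂ = (0, t)` and `c = R u_θ` that inner
product is `R t sin θ`, whose sign is that of `sin θ`.
-/

open scoped RealInnerProductSpace

noncomputable section

section InnerProductSpace

variable {E : Type*} [NormedAddCommGroup E] [InnerProductSpace ℝ E]

lemma dist_add_lt_dist_iff (v x c : E) :
    dist v (x + c) < dist v x ↔ ‖c‖ ^ 2 < 2 * ⟪v - x, c⟫ := by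
  have hsq : ‖v - (x + c)‖ ^ 2 = ‖v - x‖ ^ 2 - 2 * ⟪v - x, c⟫ + ‖c‖ ^ 2 := by
    rw [← norm_sub_sq_real, sub_add_eq_sub_sub]
  rw [dist_eq_norm, dist_eq_norm, ← pow_lt_pow_iff_left₀ (norm_nonneg _) (norm_nonneg _)
    two_ne_zero, hsq]
  constructor <;> intro h <;> linarith

lemma dist_add_lt_dist_of_inner_nonneg {v x x' c : E} (h : 0 ≤ ⟪x' - x, c⟫)
    (hv : dist v (x' + c) < dist v x') : dist v (x + c) < dist v x := by
  rw [dist_add_lt_dist_iff] at hv ⊢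
  have hsplit : ⟪v - x', c⟫ = ⟪v - x, c⟫ - ⟪x' - x, c⟫ := by
    rw [← inner_sub_left, sub_sub_sub_cancel_right]
  linarith

end InnerProductSpace

lemma Wcap_le_of_inner_nonneg {V : Finset Plane} {w : Plane → ℝ} (hw : ∀ v ∈ V, 0 ≤ w v)
    {x x' : Plane} (c : Plane) (h : 0 ≤ ⟪x' - x, c⟫) :
    Wcap V w x' (x' + c) ≤ Wcap V w x (x + c) := by
  refine Finset.sum_le_sum fun v hv => ?_
  split_ifs with h' hx
  · exact le_rfl
  · exact absurd (dist_add_lt_dist_of_inner_nonneg h h') hx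
  · exact hw v hv
  · exact le_rfl

lemma inner_pt_zero_dir (t θ : ℝ) : ⟪pt 0 t, dir θ⟫ = t * Real.sin θ := by
  simp [pt, dir, PiLp.inner_apply, Fin.sum_univ_two, mul_comm]

/-- shift lemma on a vertical line. If `x₁` is strictly above `x₂`, then
for angles `θ ∈ [0, π]` the capture at `x₁` is at most that at `x₂`, and symmetrically
for `θ ∈ [π, 2π]`. -/
theorem stmt_9 (V : Finset Plane) (w : Plane → ℝ) (hw : ∀ v ∈ V, 0 < w v)
    (R : ℝ) (hR : 0 < R) (x₁ x₂ : Plane) (t : ℝ) (ht : 0 < t) (hx : x₁ = x₂ + pt 0 t)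
    (θ : ℝ) :
    (0 ≤ θ → θ ≤ Real.pi → Wang V w R x₁ θ ≤ Wang V w R x₂ θ) ∧
    (Real.pi ≤ θ → θ ≤ 2 * Real.pi → Wang V w R x₂ θ ≤ Wang V w R x₁ θ) := by
  have hw' : ∀ v ∈ V, 0 ≤ w v := fun v hv => (hw v hv).le
  have hshift : ⟪x₁ - x₂, R • dir θ⟫ = R * t * Real.sin θ := by
    rw [hx, add_sub_cancel_left, real_inner_smul_right, inner_pt_zero_dir, mul_assoc]
  constructor
  · intro h0 hπ
    refine Wcap_le_of_inner_nonneg hw' _ ?_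
    rw [hshift]
    exact mul_nonneg (by positivity) (Real.sin_nonneg_of_nonneg_of_le_pi h0 hπ)
  · intro hπ h2π
    have hsin : Real.sin θ ≤ 0 := by
      rw [← Real.sin_sub_two_pi]
      exact Real.sin_nonpos_of_nonpos_of_neg_pi_le (by linarith) (by linarith)
    refine Wcap_le_of_inner_nonneg hw' _ ?_
    rw [← neg_sub, inner_neg_left, hshift, neg_nonneg]
    exact mul_nonpos_of_nonneg_of_nonpos (by positivity) hsin
end
end

section
/- Let x₁ be strictly above x₂ on a vertical line L, with W*(x₁) = W*(x₂), and suppose there exists θ ∈ (0,π) with θ ∈ MA(x₂) but MA(x₁) ∩ (0,π) = ∅. Then the convex hull CH(𝒞(S)) of the disks around S = {v : dist(v, y(x₂,θ)) < dist(v, x₂)} intersects the segment from x₁ to x₂ excluding x₂ — i.e., there is a point of the boundary of CH(𝒞(S)) on L lying in (x₂, x₁]. -/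
open scoped RealInnerProductSpace

noncomputable section

/-!
A point `v` is captured by the follower at `x + R • dir φ` iff its disk of radius `R / 2` lies
in the open half-plane `{p | ⟪dir φ, x⟫ < ⟪dir φ, p⟫}`, so `S` is captured iff the compact convex
set `K = CH(𝒞(S))` lies in that half-plane. In particular `K` lies strictly beyond `x₂` in the
direction `θ`, so `x₂ ∉ K`. If no boundary point of `K` lay on `(x₂, x₁]`, the whole segment
would miss `K`, and so would the downward vertical ray from `x₁`, whose part below `x₂` lies
behind `x₂` in the direction `θ ∈ (0, π)`. Separating `K` from this ray, and tilting the
separating line slightly so that it is not vertical, gives an angle `θ' ∈ (0, π)` with `K`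
strictly beyond `x₁` in the direction `θ'`. Then `y(x₁, θ')` captures all of `S`, so
`W(x₁, θ') ≥ W(S) = W*(x₂) = W*(x₁)`, contradicting `MA(x₁) ∩ (0, π) = ∅`.
-/

open Set Metric Topology

section Segment

variable {E : Type*} [AddCommGroup E] [Module ℝ E] [TopologicalSpace E] [ContinuousAdd E]
  [ContinuousSMul ℝ E]

theorem exists_mem_frontier_of_notMem_of_mem {K : Set E} (hK : IsClosed K) {x y : E}
    (hx : x ∉ K) {s₀ : ℝ} (hs₀ : s₀ ∈ Ioc (0 : ℝ) 1) (hmem : x + s₀ • (y - x) ∈ K) :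
    ∃ s ∈ Ioc (0 : ℝ) 1, x + s • (y - x) ∈ frontier K := by
  set γ : ℝ → E := fun s => x + s • (y - x)
  have hγ0 : γ 0 = x := by simp [γ]
  have hconn : IsPreconnected (γ '' Icc 0 s₀) := isPreconnected_Icc.image γ (by fun_prop)
  by_contra! hnone
  have hsub : γ '' Icc 0 s₀ ⊆ interior K ∪ Kᶜ := by
    rintro _ ⟨s, hs, rfl⟩
    rcases hs.1.eq_or_lt with rfl | hpos
    · exact Or.inr (hγ0 ▸ hx)
    · by_cases hsK : γ s ∈ K
      · exact Or.inl (by_contra fun hint =>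
          hnone s ⟨hpos, hs.2.trans hs₀.2⟩ ⟨subset_closure hsK, hint⟩)
      · exact Or.inr hsK
  rcases hconn.subset_or_subset isOpen_interior hK.isOpen_compl
    (disjoint_compl_right.mono_left interior_subset) hsub with hint | hout
  · exact hx (hγ0 ▸ interior_subset (hint ⟨0, ⟨le_rfl, hs₀.1.le⟩, rfl⟩))
  · exact hout ⟨s₀, ⟨hs₀.1.le, le_rfl⟩, rfl⟩ hmem

end Segment

section Ray

variable {E : Type*} [NormedAddCommGroup E] [NormedSpace ℝ E]

theorem exists_strongDual_nonneg_of_disjoint_ray {K : Set E} (hKc : IsCompact K)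
    (hKcv : Convex ℝ K) {x e : E} (hray : ∀ s : ℝ, 0 ≤ s → x - s • e ∉ K) :
    ∃ f : StrongDual ℝ E, 0 ≤ f e ∧ ∀ p ∈ K, f x < f p := by
  have hline : ∀ s : ℝ, AffineMap.lineMap x (x - e) s = x - s • e := fun s => by
    rw [AffineMap.lineMap_apply, vsub_eq_sub, vadd_eq_add, sub_sub_cancel_left, smul_neg,
      neg_add_eq_sub]
  have hclosed : IsClosed (AffineMap.lineMap x (x - e) '' Ici (0 : ℝ)) := by
    have : ⇑(AffineMap.lineMap x (x - e) : ℝ →ᵃ[ℝ] E) =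
        Homeomorph.addRight x ∘ (· • (x - e - x)) := by
      funext s
      simp [AffineMap.lineMap_apply]
    rw [this]
    exact ((Homeomorph.addRight x).isClosedMap.comp (isClosedMap_smul_left _)) _ isClosed_Ici
  have hdisj : Disjoint K (AffineMap.lineMap x (x - e) '' Ici (0 : ℝ)) := by
    rw [disjoint_right]
    rintro _ ⟨s, hs, rfl⟩
    rw [hline]
    exact hray s hs
  obtain ⟨g, a, b, hgK, hab, hgray⟩ := geometric_hahn_banach_compact_closed hKcv hKc
    ((convex_Ici 0).affine_image _) hclosed hdisj
  have hgray' : ∀ s : ℝ, 0 ≤ s → b < g x - s * g e := fun s hs => by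
    simpa [hline] using hgray _ ⟨s, hs, rfl⟩
  have hgx : b < g x := by simpa using hgray' 0 le_rfl
  refine ⟨-g, ?_, fun p hp => ?_⟩
  · by_contra! hpos
    rw [neg_apply, neg_neg_iff_pos] at hpos
    have := hgray' ((g x - b) / g e) (div_nonneg (by linarith) hpos.le)
    rw [div_mul_cancel₀ _ hpos.ne'] at this
    linarith
  · rw [neg_apply, neg_apply, neg_lt_neg_iff]
    linarith [hgK p hp]

/-- Tilting `g` slightly towards `e` keeps the strict inequalities on the compact set `K`. -/
theorem IsCompact.exists_strongDual_pos_of_nonneg {K : Set E} (hKc : IsCompact K) {x e : E}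
    (he : e ≠ 0) {g : StrongDual ℝ E} (hge : 0 ≤ g e) (hgK : ∀ p ∈ K, g x < g p) :
    ∃ f : StrongDual ℝ E, 0 < f e ∧ ∀ p ∈ K, f x < f p := by
  obtain ⟨h, -, hhe⟩ := exists_dual_vector ℝ e (norm_ne_zero_iff.mpr he)
  have hnear : ∀ᶠ δ in 𝓝 (0 : ℝ), ∀ p ∈ K, (g + δ • h) x < (g + δ • h) p :=
    hKc.eventually_forall_of_forall_eventually fun p hp =>
      (isOpen_lt (by fun_prop) (by fun_prop)).mem_nhds (by simpa using hgK p hp)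
  obtain ⟨δ, hδK, hδ⟩ := ((hnear.filter_mono nhdsWithin_le_nhds).and
    (self_mem_nhdsWithin (s := Ioi (0 : ℝ)))).exists
  refine ⟨g + δ • h, ?_, hδK⟩
  have : 0 < ‖e‖ := norm_pos_iff.mpr he
  simp only [add_apply, smul_apply, smul_eq_mul, hhe, RCLike.ofReal_real_eq_id, id_eq]
  nlinarith

end Ray

section Capture

variable {E : Type*} [NormedAddCommGroup E] [InnerProductSpace ℝ E]

theorem dist_add_smul_lt_dist_iff {R : ℝ} (hR : 0 < R) {d : E} (hd : ‖d‖ = 1) (v x : E) :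
    dist v (x + R • d) < dist v x ↔ R / 2 < ⟪d, v - x⟫ := by
  have hsq : dist v (x + R • d) ^ 2 = dist v x ^ 2 - 2 * R * ⟪d, v - x⟫ + R ^ 2 := by
    rw [dist_eq_norm, dist_eq_norm, show v - (x + R • d) = (v - x) - R • d by abel,
      norm_sub_sq_real, real_inner_smul_right, norm_smul, Real.norm_of_nonneg hR.le, hd,
      real_inner_comm]
    ring
  rw [← sq_lt_sq₀ dist_nonneg dist_nonneg, hsq]
  constructor <;> intro h <;> nlinarith

theorem closedBall_subset_halfSpace_iff {r : ℝ} (hr : 0 ≤ r) {d : E} (hd : ‖d‖ = 1) (v x : E) :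
    closedBall v r ⊆ {p | ⟪d, x⟫ < ⟪d, p⟫} ↔ r < ⟪d, v - x⟫ := by
  constructor
  · intro h
    have hmem : v - r • d ∈ closedBall v r := by
      rw [mem_closedBall, dist_eq_norm, sub_sub_cancel_left, norm_neg, norm_smul, hd, mul_one,
        Real.norm_of_nonneg hr]
    have : ⟪d, x⟫ < ⟪d, v - r • d⟫ := h hmem
    rw [inner_sub_right, real_inner_smul_right, real_inner_self_eq_norm_sq, hd] at this
    rw [inner_sub_right]
    linarith
  · intro h p hp
    have hpv : |⟪d, p - v⟫| ≤ r := by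
      calc |⟪d, p - v⟫| ≤ ‖d‖ * ‖p - v‖ := abs_real_inner_le_norm d (p - v)
        _ ≤ r := by rw [hd, one_mul, ← dist_eq_norm]; exact hp
    have hsplit : ⟪d, p⟫ - ⟪d, x⟫ = ⟪d, v - x⟫ + ⟪d, p - v⟫ := by
      simp only [inner_sub_right]
      ring
    show ⟪d, x⟫ < ⟪d, p⟫
    linarith [neg_abs_le ⟪d, p - v⟫]

theorem convexHull_biUnion_closedBall_subset_iff {R : ℝ} (hR : 0 < R) {d : E} (hd : ‖d‖ = 1)
    (S : Set E) (x : E) :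
    convexHull ℝ (⋃ v ∈ S, closedBall v (R / 2)) ⊆ {p | ⟪d, x⟫ < ⟪d, p⟫} ↔
      ∀ v ∈ S, dist v (x + R • d) < dist v x := by
  have hconv : Convex ℝ {p : E | ⟪d, x⟫ < ⟪d, p⟫} := convex_halfSpace_gt (innerₛₗ ℝ d).isLinear _
  rw [hconv.convexHull_subset_iff, iUnion₂_subset_iff]
  simp only [closedBall_subset_halfSpace_iff (half_pos hR).le hd, dist_add_smul_lt_dist_iff hR hd]

end Capture

theorem Set.Finite.isCompact_convexHull_biUnion_closedBall {E : Type*} [NormedAddCommGroup E]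
    [NormedSpace ℝ E] [ProperSpace E] {S : Set E} (hS : S.Finite) {r : ℝ} (hr : 0 ≤ r) :
    IsCompact (convexHull ℝ (⋃ v ∈ S, closedBall v r)) := by
  rw [← hS.isCompact.cthickening_eq_biUnion_closedBall hr, ← hS.isCompact.add_closedBall_zero hr,
    convexHull_add, (convex_closedBall 0 r).convexHull_eq]
  exact (hS.isCompact_convexHull ℝ).add (isCompact_closedBall 0 r)

theorem Wcap_le_Wcap {V : Finset Plane} {w : Plane → ℝ} {x y x' y' : Plane}
    (hw : ∀ v ∈ V, 0 ≤ w v) (h : ∀ v ∈ V, dist v y < dist v x → dist v y' < dist v x') :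
    Wcap V w x y ≤ Wcap V w x' y' := by
  refine Finset.sum_le_sum fun v hv => ?_
  split_ifs with hxy hxy'
  · exact le_rfl
  · exact absurd (h v hv hxy) hxy'
  · exact hw v hv
  · exact le_rfl

theorem inner_pt_right (u : Plane) (a b : ℝ) : ⟪u, pt a b⟫ = u 0 * a + u 1 * b := by
  simp [PiLp.inner_apply, Fin.sum_univ_two, pt, mul_comm]

theorem Plane.norm_sq_eq (u : Plane) : ‖u‖ ^ 2 = u 0 ^ 2 + u 1 ^ 2 := by
  simp [EuclideanSpace.norm_sq_eq, Fin.sum_univ_two]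

theorem norm_dir (θ : ℝ) : ‖dir θ‖ = 1 := by
  have h := Plane.norm_sq_eq (dir θ)
  have h0 : dir θ 0 = Real.cos θ := rfl
  have h1 : dir θ 1 = Real.sin θ := rfl
  rw [h0, h1, Real.cos_sq_add_sin_sq] at h
  nlinarith [norm_nonneg (dir θ)]

theorem exists_angle_eq_norm_smul_dir {u : Plane} (hu : 0 < u 1) :
    ∃ θ ∈ Ioo 0 Real.pi, u = ‖u‖ • dir θ := by
  have hn : 0 < ‖u‖ := norm_pos_iff.mpr fun h => by simp [h] at hu
  have hsq := Plane.norm_sq_eq u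
  set c := u 0 / ‖u‖ with hc_def
  have hc : |c| < 1 := by
    rw [abs_div, abs_norm, div_lt_one hn, ← sq_lt_sq₀ (abs_nonneg _) hn.le, sq_abs]
    nlinarith
  obtain ⟨hc₁, hc₂⟩ := abs_lt.mp hc
  have hsin : Real.sin (Real.arccos c) = u 1 / ‖u‖ := by
    rw [Real.sin_arccos, ← Real.sqrt_sq (div_pos hu hn).le]
    congr 1
    rw [hc_def]
    field_simp
    linarith
  refine ⟨Real.arccos c, ⟨Real.arccos_pos.mpr hc₂, Real.arccos_lt_pi.mpr hc₁⟩, ?_⟩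
  ext i
  fin_cases i
  · show u 0 = ‖u‖ * Real.cos (Real.arccos c)
    rw [Real.cos_arccos hc₁.le hc₂.le, hc_def]
    field_simp
  · show u 1 = ‖u‖ * Real.sin (Real.arccos c)
    rw [hsin]
    field_simp

theorem exists_angle_forall_inner_dir_lt {K : Set Plane} (hKc : IsCompact K) (hKcv : Convex ℝ K)
    {x : Plane} {t : ℝ} (ht : 0 < t) (hray : ∀ s : ℝ, 0 ≤ s → x - s • pt 0 t ∉ K) :
    ∃ θ ∈ Ioo 0 Real.pi, ∀ p ∈ K, ⟪dir θ, x⟫ < ⟪dir θ, p⟫ := by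
  have hpt : pt 0 t ≠ 0 := fun h => ht.ne' (congrArg (· 1) h)
  obtain ⟨g, hg, hgK⟩ := exists_strongDual_nonneg_of_disjoint_ray hKc hKcv hray
  obtain ⟨f, hf, hfK⟩ := hKc.exists_strongDual_pos_of_nonneg hpt hg hgK
  set u := (InnerProductSpace.toDual ℝ Plane).symm f
  have hu : ∀ p, ⟪u, p⟫ = f p := fun p => InnerProductSpace.toDual_symm_apply
  have hu₁ : 0 < u 1 := by
    have := hu (pt 0 t)
    rw [inner_pt_right] at this
    nlinarith
  obtain ⟨θ, hθ, hudir⟩ := exists_angle_eq_norm_smul_dir hu₁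
  have hn : 0 < ‖u‖ := norm_pos_iff.mpr fun h => by simp [h] at hu₁
  refine ⟨θ, hθ, fun p hp => ?_⟩
  have := hfK p hp
  rw [← hu, ← hu, hudir, real_inner_smul_left, real_inner_smul_left] at this
  exact lt_of_mul_lt_mul_left this hn.le

theorem sub_smul_notMem_of_forall_notMem_frontier {K : Set Plane} (hK : IsClosed K)
    {x₁ x₂ : Plane} {θ t : ℝ} (hθ : θ ∈ Ioo 0 Real.pi) (ht : 0 ≤ t) (hx : x₁ = x₂ + pt 0 t)
    (hK₂ : ∀ p ∈ K, ⟪dir θ, x₂⟫ < ⟪dir θ, p⟫)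
    (hnone : ∀ s ∈ Ioc (0 : ℝ) 1, x₂ + s • (x₁ - x₂) ∉ frontier K) {s : ℝ} (hs : 0 ≤ s) :
    x₁ - s • pt 0 t ∉ K := by
  intro hmem
  have hpt : x₁ - s • pt 0 t = x₂ + (1 - s) • (x₁ - x₂) := by rw [hx]; module
  rw [hpt] at hmem
  rcases lt_or_ge s 1 with hs1 | hs1
  · obtain ⟨r, hr, hfr⟩ := exists_mem_frontier_of_notMem_of_mem hK
      (fun h => lt_irrefl _ (hK₂ x₂ h)) ⟨by linarith, by linarith⟩ hmem
    exact hnone r hr hfr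
  · have hbelow := hK₂ _ hmem
    rw [hx, add_sub_cancel_left, inner_add_right, real_inner_smul_right, inner_pt_right]
      at hbelow
    have hsin : 0 < dir θ 1 := Real.sin_pos_of_pos_of_lt_pi hθ.1 hθ.2
    nlinarith [mul_nonneg hsin.le ht]

/-- with `x₁` strictly above `x₂` on a vertical line, `W*(x₁) = W*(x₂)`,
some maximizing angle `θ ∈ (0,π)` for `x₂`, and no maximizing angle of `x₁` in `(0,π)`,
the boundary of `CH(𝒞(S))` (for `S` the set captured by `y(x₂,θ)`) meets the segment
from `x₂` to `x₁` excluding `x₂`. -/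
theorem stmt_17 (V : Finset Plane) (w : Plane → ℝ) (hw : ∀ v ∈ V, 0 < w v)
    (R : ℝ) (hR : 0 < R) (x₁ x₂ : Plane) (t : ℝ) (ht : 0 < t) (hx : x₁ = x₂ + pt 0 t)
    (heq : WstarC V w R x₁ = WstarC V w R x₂)
    (θ : ℝ) (hθ : θ ∈ Set.Ioo 0 Real.pi)
    (hθmax : Wang V w R x₂ θ = WstarC V w R x₂)
    (hMA1 : ∀ θ' ∈ Set.Ioo 0 Real.pi, Wang V w R x₁ θ' < WstarC V w R x₁) :
    ∃ s ∈ Set.Ioc (0 : ℝ) 1, x₂ + s • (x₁ - x₂) ∈ frontier (convexHull ℝ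
      (⋃ v ∈ {v : Plane | v ∈ V ∧ dist v (x₂ + R • dir θ) < dist v x₂},
        Metric.closedBall v (R / 2))) := by
  set S : Set Plane := {v | v ∈ V ∧ dist v (x₂ + R • dir θ) < dist v x₂}
  set K := convexHull ℝ (⋃ v ∈ S, closedBall v (R / 2))
  have hKc : IsCompact K := (V.finite_toSet.subset fun v hv => hv.1)
    |>.isCompact_convexHull_biUnion_closedBall (half_pos hR).le
  have hK₂ : ∀ p ∈ K, ⟪dir θ, x₂⟫ < ⟪dir θ, p⟫ :=
    (convexHull_biUnion_closedBall_subset_iff hR (norm_dir θ) S x₂).2 fun v hv => hv.2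
  by_contra! hnone
  have hray : ∀ s : ℝ, 0 ≤ s → x₁ - s • pt 0 t ∉ K := fun s hs =>
    sub_smul_notMem_of_forall_notMem_frontier hKc.isClosed hθ ht.le hx hK₂ hnone hs
  obtain ⟨θ', hθ', hK₁⟩ := exists_angle_forall_inner_dir_lt hKc (convex_convexHull ℝ _) ht hray
  have hcapt := (convexHull_biUnion_closedBall_subset_iff hR (norm_dir θ') S x₁).1 hK₁
  have hle : Wang V w R x₂ θ ≤ Wang V w R x₁ θ' :=
    Wcap_le_Wcap (fun v hv => (hw v hv).le) fun v hv h => hcapt v ⟨hv, h⟩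
  exact (hMA1 θ' hθ').not_ge (heq ▸ hθmax ▸ hle)
end
end
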